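/- arXiv:2409.17807 — 7 statements merged into one kernel-verified Lean document; each statement's English description precedes it below -/
import Mathlib

section
/- Let Δ be an uncountable set and φ : {D ⊆ Δ : |D| = 2} → Δ a function with φ(D) ∈ D for every two-element subset D of Δ. Then there exists δ₀ ∈ Δ such that the set {δ ∈ Δ : δ ≠ δ₀ and φ({δ, δ₀}) = δ₀} is infinite. -/
theorem stmt1 {Δ : Type*} [Uncountable Δ] [DecidableEq Δ]
    (φ : Finset Δ → Δ) (hφ : ∀ D : Finset Δ, D.card = 2 → φ D ∈ D) :
    ∃ δ₀ : Δ, {δ : Δ | δ ≠ δ₀ ∧ φ {δ, δ₀} = δ₀}.Infinite := by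
  by_contra h
  push_neg at h
  set S : Δ → Set Δ := fun δ₀ => {δ : Δ | δ ≠ δ₀ ∧ φ {δ, δ₀} = δ₀} with hSdef
  have hSfin : ∀ δ₀, (S δ₀).Finite := h
  obtain g := Infinite.natEmbedding Δ
  -- iterated closure
  let A : ℕ → Set Δ := fun n => Nat.rec (Set.range g)
    (fun _ An => An ∪ ⋃ a ∈ An, S a) n
  have hA0 : A 0 = Set.range g := rfl
  have hAsucc : ∀ n, A (n + 1) = A n ∪ ⋃ a ∈ A n, S a := fun n => rfl
  have hAcount : ∀ n, (A n).Countable := by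
    intro n
    induction n with
    | zero => exact Set.countable_range g
    | succ n ih =>
      rw [hAsucc]
      exact ih.union (ih.biUnion fun a _ => (hSfin a).countable)
  set B : Set Δ := ⋃ n, A n with hBdef
  have hBcount : B.Countable := Set.countable_iUnion hAcount
  have : ∃ y, y ∉ B := by
    by_contra hy
    push_neg at hy
    have : B = Set.univ := Set.eq_univ_of_forall hy
    have := Set.countable_univ_iff.mp (this ▸ hBcount)
    exact (not_countable (α := Δ)) this
  obtain ⟨y, hy⟩ := this
  have hrange : Set.range g ⊆ S y := by
    rintro a ha
    have haB : a ∈ B := Set.mem_iUnion.mpr ⟨0, ha⟩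
    have hya : y ≠ a := fun e => hy (e ▸ haB)
    -- y ∉ S a
    have hySa : y ∉ S a := by
      intro hmem
      apply hy
      refine Set.mem_iUnion.mpr ⟨1, ?_⟩
      show y ∈ A 0 ∪ ⋃ a ∈ A 0, S a
      exact Or.inr (Set.mem_biUnion ha hmem)
    have hcard : ({y, a} : Finset Δ).card = 2 := Finset.card_pair hya
    have hmem := hφ _ hcard
    rw [Finset.mem_insert, Finset.mem_singleton] at hmem
    have hNa : φ {y, a} ≠ a := fun e => hySa ⟨hya, e⟩
    have hphi : φ {y, a} = y := hmem.resolve_right hNa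
    exact ⟨hya.symm, by rwa [Finset.pair_comm]⟩
  exact (hSfin y).subset hrange |>.not_infinite
    (Set.infinite_range_of_injective g.injective)
end

section
/- Let Z be a compact Hausdorff space and n a positive integer. Let Z_[n] denote the set of nonempty closed subsets of Z of cardinality at most n, with the Vietoris topology, and let Z_[n]^⊆ = {(z, x) ∈ Z × Z_[n] : z ∈ x} with the subspace topology. Then the second projection Z_[n]^⊆ → Z_[n] is a continuous open surjection whose fibers all have cardinality at most n. -/
/-- Type synonym: the hyperspace of subsets of `Z` with the Vietoris topology. -/
def Hyper (Z : Type*) : Type _ := Set Z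

/-- The underlying set of a point of the hyperspace. -/
def Hyper.toSet {Z : Type*} (A : Hyper Z) : Set Z := A

/-- The Vietoris topology, generated by the sets `{A | A ⊆ W}` and
`{A | A ∩ W ≠ ∅}` for open `W`. -/
instance instHyperTop (Z : Type*) [TopologicalSpace Z] : TopologicalSpace (Hyper Z) :=
  TopologicalSpace.generateFrom
    {s | ∃ W : Set Z, IsOpen W ∧
      (s = {A : Hyper Z | A.toSet ⊆ W} ∨ s = {A : Hyper Z | (A.toSet ∩ W).Nonempty})}

/-- `Z_[n]`: nonempty subsets of `Z` of cardinality at most `n`, with the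
Vietoris topology. -/
def SubLe (Z : Type*) [TopologicalSpace Z] (n : ℕ) : Type _ :=
  {A : Hyper Z // A.toSet.Nonempty ∧ A.toSet.Finite ∧ A.toSet.ncard ≤ n}

instance (Z : Type*) [TopologicalSpace Z] (n : ℕ) : TopologicalSpace (SubLe Z n) :=
  inferInstanceAs (TopologicalSpace
    {A : Hyper Z // A.toSet.Nonempty ∧ A.toSet.Finite ∧ A.toSet.ncard ≤ n})

/-- `Z_(k)`: subsets of `Z` of cardinality exactly `k`, with the Vietoris topology. -/
def SubEq (Z : Type*) [TopologicalSpace Z] (k : ℕ) : Type _ :=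
  {A : Hyper Z // A.toSet.Finite ∧ A.toSet.ncard = k}

instance (Z : Type*) [TopologicalSpace Z] (k : ℕ) : TopologicalSpace (SubEq Z k) :=
  inferInstanceAs (TopologicalSpace {A : Hyper Z // A.toSet.Finite ∧ A.toSet.ncard = k})

/-- The incidence correspondence `Z_[n]^⊆ = {(z, x) : z ∈ x}`. -/
def Inc (Z : Type*) [TopologicalSpace Z] (n : ℕ) : Type _ :=
  {p : Z × SubLe Z n // p.1 ∈ (p.2.1).toSet}

instance (Z : Type*) [TopologicalSpace Z] (n : ℕ) : TopologicalSpace (Inc Z n) :=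
  inferInstanceAs (TopologicalSpace {p : Z × SubLe Z n // p.1 ∈ (p.2.1).toSet})

/-- The projection `Z_[n]^⊆ → Z_[n]`. -/
def IncProj (Z : Type*) [TopologicalSpace Z] (n : ℕ) : Inc Z n → SubLe Z n :=
  fun p => p.1.2

/-- The incidence correspondence projection is a continuous open surjection
with fibers of cardinality at most `n`. -/
theorem stmt3 (Z : Type*) [TopologicalSpace Z] [CompactSpace Z] [T2Space Z]
    (n : ℕ) (hn : 0 < n) :
    Continuous (IncProj Z n) ∧ IsOpenMap (IncProj Z n) ∧
    Function.Surjective (IncProj Z n) ∧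
    ∀ x : SubLe Z n, {p : Inc Z n | IncProj Z n p = x}.ncard ≤ n := by
  refine ⟨?_, ?_, ?_, ?_⟩
  · exact (continuous_snd.comp continuous_subtype_val : Continuous fun p : Inc Z n => p.1.2)
  · intro U hU
    obtain ⟨O, hO, rfl⟩ := isOpen_induced_iff.mp hU
    rw [isOpen_iff_forall_mem_open]
    rintro x ⟨p, hp, rfl⟩
    obtain ⟨V, W, hV, hW, hpV, hpW, hVWO⟩ := isOpen_prod_iff.mp hO p.1.1 p.1.2 hp
    refine ⟨W ∩ {y : SubLe Z n | ((y.1).toSet ∩ V).Nonempty}, ?_, ?_, hpW, p.1.1, p.2, hpV⟩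
    · rintro y ⟨hyW, z, hzy, hzV⟩
      exact ⟨⟨(z, y), hzy⟩, hVWO ⟨hzV, hyW⟩, rfl⟩
    · refine hW.inter ?_
      have : IsOpen {A : Hyper Z | (A.toSet ∩ V).Nonempty} :=
        TopologicalSpace.isOpen_generateFrom_of_mem ⟨V, hV, Or.inr rfl⟩
      exact this.preimage continuous_subtype_val
  · intro x
    obtain ⟨z, hz⟩ := x.2.1
    exact ⟨⟨(z, x), hz⟩, rfl⟩
  · intro x
    have h1 : {p : Inc Z n | IncProj Z n p = x}.ncard ≤ (x.1).toSet.ncard := by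
      refine Set.ncard_le_ncard_of_injOn (fun p => p.1.1) ?_ ?_ x.2.2.1
      · rintro p rfl; exact p.2
      · rintro p rfl q hq h
        exact Subtype.ext (Prod.ext h hq.symm)
    exact h1.trans x.2.2.2
end

section
/- Let Δ be an uncountable set, partitioned as Δ = Δ₁ ⊔ Δ₂ with both parts uncountable, and let Δ⁺ be the one-point compactification of the discrete space Δ. In the space Δ⁺_(2) of two-element subsets of Δ⁺ with the Vietoris topology, the sets F_i = {{∞, δ} : δ ∈ Δ_i} for i = 1, 2 are disjoint closed sets that do not admit disjoint open neighborhoods. -/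
open OnePoint Set

/-- auxiliary: view a set as a point of the hyperspace. -/
def toH {Z : Type*} (s : Set Z) : Hyper Z := s

section Aux

variable {Δ : Type*} [TopologicalSpace Δ] [DiscreteTopology Δ]

lemma aux_sub_key (δ : Δ) (s : Set (Hyper (OnePoint Δ)))
    (hs : s ∈ {s | ∃ W : Set (OnePoint Δ), IsOpen W ∧
      (s = {A : Hyper (OnePoint Δ) | A.toSet ⊆ W} ∨
       s = {A : Hyper (OnePoint Δ) | (A.toSet ∩ W).Nonempty})})
    (hA : toH ({∞, (δ : OnePoint Δ)} : Set (OnePoint Δ)) ∈ s) :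
    ∃ E : Set Δ, E.Finite ∧ ∀ δ' ∉ E,
      toH ({(δ : OnePoint Δ), (δ' : OnePoint Δ)} : Set (OnePoint Δ)) ∈ s := by
  obtain ⟨W, hW, h | h⟩ := hs
  · subst h
    have hsub : ({∞, (δ : OnePoint Δ)} : Set (OnePoint Δ)) ⊆ W := hA
    have hinf : ∞ ∈ W := hsub (by simp)
    have hδ : (δ : OnePoint Δ) ∈ W := hsub (by simp)
    have hfin : ((((↑) : Δ → OnePoint Δ) ⁻¹' W)ᶜ).Finite :=
      (((OnePoint.isOpen_iff_of_mem' hinf).1 hW).1).finite_of_discrete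
    refine ⟨(((↑) : Δ → OnePoint Δ) ⁻¹' W)ᶜ, hfin, fun δ' hδ' => ?_⟩
    have h2 : (δ' : OnePoint Δ) ∈ W := by simpa using hδ'
    show ({(δ : OnePoint Δ), (δ' : OnePoint Δ)} : Set (OnePoint Δ)) ⊆ W
    exact Set.insert_subset hδ (Set.singleton_subset_iff.2 h2)
  · subst h
    by_cases hδ : (δ : OnePoint Δ) ∈ W
    · exact ⟨∅, Set.finite_empty, fun δ' _ =>
        ⟨(δ : OnePoint Δ), Set.mem_insert _ _, hδ⟩⟩
    · have hinf : ∞ ∈ W := by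
        obtain ⟨x, hx1, hx2⟩ := hA
        rcases hx1 with h | h <;> simp_all [Hyper.toSet]
      have hfin : ((((↑) : Δ → OnePoint Δ) ⁻¹' W)ᶜ).Finite :=
        (((OnePoint.isOpen_iff_of_mem' hinf).1 hW).1).finite_of_discrete
      refine ⟨(((↑) : Δ → OnePoint Δ) ⁻¹' W)ᶜ, hfin, fun δ' hδ' => ?_⟩
      have h2 : (δ' : OnePoint Δ) ∈ W := by simpa using hδ'
      exact ⟨(δ' : OnePoint Δ), Set.mem_insert_of_mem _ rfl, h2⟩

lemma aux_key (δ : Δ) (T : Set (Hyper (OnePoint Δ)))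
    (hT : T ∈ nhds (toH ({∞, (δ : OnePoint Δ)} : Set (OnePoint Δ)))) :
    ∃ E : Set Δ, E.Finite ∧ ∀ δ' ∉ E,
      toH ({(δ : OnePoint Δ), (δ' : OnePoint Δ)} : Set (OnePoint Δ)) ∈ T := by
  have hbasis := TopologicalSpace.isTopologicalBasis_of_subbasis
    (t := instHyperTop (OnePoint Δ)) (s := {s | ∃ W : Set (OnePoint Δ), IsOpen W ∧
      (s = {A : Hyper (OnePoint Δ) | A.toSet ⊆ W} ∨
       s = {A : Hyper (OnePoint Δ) | (A.toSet ∩ W).Nonempty})}) rfl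
  obtain ⟨t, ⟨f, ⟨hfin, hfsub⟩, rfl⟩, hAt, htT⟩ := hbasis.mem_nhds_iff.1 hT
  have hchoice : ∀ s ∈ f, ∃ E : Set Δ, E.Finite ∧ ∀ δ' ∉ E,
      toH ({(δ : OnePoint Δ), (δ' : OnePoint Δ)} : Set (OnePoint Δ)) ∈ s :=
    fun s hsf => aux_sub_key δ s (hfsub hsf) (hAt s hsf)
  choose! Efun hEfin hEmem using hchoice
  refine ⟨⋃ s ∈ f, Efun s, hfin.biUnion (fun s hs => hEfin s hs), fun δ' hδ' => ?_⟩
  apply htT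
  intro s hsf
  exact hEmem s hsf δ' (fun h => hδ' (Set.mem_biUnion hsf h))

/-- The point `{∞, δ}` of `Δ⁺_(2)`. -/
def mkI (δ : Δ) : SubEq (OnePoint Δ) 2 :=
  ⟨toH ({∞, (δ : OnePoint Δ)} : Set (OnePoint Δ)),
    (Set.finite_singleton _).insert _,
    Set.ncard_pair (OnePoint.infty_ne_coe δ)⟩

/-- The point `{δ, δ'}` of `Δ⁺_(2)`, for `δ ≠ δ'`. -/
def mkS (δ δ' : Δ) (h : δ ≠ δ') : SubEq (OnePoint Δ) 2 :=
  ⟨toH ({(δ : OnePoint Δ), (δ' : OnePoint Δ)} : Set (OnePoint Δ)),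
    (Set.finite_singleton _).insert _,
    Set.ncard_pair (by simpa [OnePoint.coe_eq_coe] using h)⟩

lemma hyperOpen_sub {Z : Type*} [TopologicalSpace Z] {W : Set Z} (hW : IsOpen W) :
    IsOpen {A : Hyper Z | A.toSet ⊆ W} :=
  TopologicalSpace.isOpen_generateFrom_of_mem ⟨W, hW, Or.inl rfl⟩

lemma hyperOpen_inter {Z : Type*} [TopologicalSpace Z] {W : Set Z} (hW : IsOpen W) :
    IsOpen {A : Hyper Z | (A.toSet ∩ W).Nonempty} :=
  TopologicalSpace.isOpen_generateFrom_of_mem ⟨W, hW, Or.inr rfl⟩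

omit [DiscreteTopology Δ] in
lemma aux_nhds (S : SubEq (OnePoint Δ) 2) (u : Set (SubEq (OnePoint Δ) 2)) :
    u ∈ nhds S ↔ ∃ t ∈ nhds (S.1), Subtype.val ⁻¹' t ⊆ u := by
  rw [show (nhds S) = Filter.comap Subtype.val (nhds S.1) from nhds_induced _ _]
  exact Filter.mem_comap

lemma aux_closed (P Q : Set Δ) (hdisj : Disjoint P Q) (hunion : P ∪ Q = Set.univ) :
    IsClosed {S : SubEq (OnePoint Δ) 2 |
      ∃ δ ∈ P, S.1.toSet = {(∞ : OnePoint Δ), (δ : OnePoint Δ)}} := by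
  rw [← isOpen_compl_iff, isOpen_iff_mem_nhds]
  intro S hS
  rw [Set.mem_compl_iff, Set.mem_setOf_eq] at hS
  rw [aux_nhds]
  by_cases hinf : ∞ ∈ S.1.toSet
  · -- S.1.toSet = {∞, δ} with δ ∈ Q
    obtain ⟨a, b, hab, hset⟩ := Set.ncard_eq_two.1 S.2.2
    have hδ : ∃ δ : Δ, S.1.toSet = {(∞ : OnePoint Δ), (δ : OnePoint Δ)} := by
      rw [hset] at hinf ⊢
      rw [Set.mem_insert_iff, Set.mem_singleton_iff] at hinf
      rcases hinf with h | h
      · obtain ⟨δ, hδ⟩ := OnePoint.ne_infty_iff_exists.1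
          (fun hb : b = ∞ => hab (h.symm.trans hb.symm))
        exact ⟨δ, by rw [← h, ← hδ]⟩
      · obtain ⟨δ, hδ⟩ := OnePoint.ne_infty_iff_exists.1
          (fun ha : a = ∞ => hab (ha.trans h))
        exact ⟨δ, by rw [← h, ← hδ, Set.pair_comm]⟩
    obtain ⟨δ, hδ⟩ := hδ
    have hδQ : δ ∈ Q := by
      rcases (hunion ▸ Set.mem_univ δ : δ ∈ P ∪ Q) with h | h
      · exact absurd ⟨δ, h, hδ⟩ hS
      · exact h
    have hWopen : IsOpen ({(δ : OnePoint Δ)} : Set (OnePoint Δ)) := by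
      rw [OnePoint.isOpen_iff_of_notMem
        (by simp [(OnePoint.infty_ne_coe δ)] : ∞ ∉ ({(δ : OnePoint Δ)} : Set (OnePoint Δ)))]
      exact isOpen_discrete _
    refine ⟨{A : Hyper (OnePoint Δ) | (A.toSet ∩ {(δ : OnePoint Δ)}).Nonempty},
      (hyperOpen_inter hWopen).mem_nhds ?_, ?_⟩
    · exact ⟨(δ : OnePoint Δ), by rw [hδ]; exact Set.mem_insert_of_mem _ rfl, rfl⟩
    · rintro S' hS'mem ⟨δ₁, hδ₁P, hδ₁⟩
      obtain ⟨x, hx1, hx2⟩ := hS'mem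
      rw [hδ₁] at hx1
      rw [Set.mem_singleton_iff] at hx2
      subst hx2
      rw [Set.mem_insert_iff, Set.mem_singleton_iff] at hx1
      rcases hx1 with h | h
      · exact OnePoint.coe_ne_infty δ h
      · rw [OnePoint.coe_eq_coe] at h
        exact Set.disjoint_left.1 hdisj hδ₁P (h ▸ hδQ)
  · -- ∞ ∉ S.1.toSet
    refine ⟨{A : Hyper (OnePoint Δ) | A.toSet ⊆ (Set.range ((↑) : Δ → OnePoint Δ))},
      (hyperOpen_sub OnePoint.isOpen_range_coe).mem_nhds ?_, ?_⟩
    · intro x hx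
      have hxne : x ≠ ∞ := fun h => hinf (h ▸ hx)
      obtain ⟨y, hy⟩ := OnePoint.ne_infty_iff_exists.1 hxne
      exact ⟨y, hy⟩
    · rintro S' hS' ⟨δ₁, hδ₁P, hδ₁⟩
      have hm : (∞ : OnePoint Δ) ∈ (S' : SubEq (OnePoint Δ) 2).1.toSet := by
        rw [hδ₁]; exact Set.mem_insert _ _
      exact OnePoint.infty_notMem_range_coe (hS' hm)

end Aux

open OnePoint in
/-- For a partition `Δ = Δ₁ ⊔ Δ₂` into uncountable pieces, the sets
`F_i = {{∞, δ} : δ ∈ Δ_i}` are disjoint closed subsets of `Δ⁺_(2)` without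
disjoint open neighborhoods. -/
theorem stmt7 (Δ : Type*) [TopologicalSpace Δ] [DiscreteTopology Δ]
    (Δ₁ Δ₂ : Set Δ) (hdisj : Disjoint Δ₁ Δ₂) (hunion : Δ₁ ∪ Δ₂ = Set.univ)
    (h1 : ¬ Δ₁.Countable) (h2 : ¬ Δ₂.Countable) :
    let F₁ : Set (SubEq (OnePoint Δ) 2) :=
      {S | ∃ δ ∈ Δ₁, S.1.toSet = {(∞ : OnePoint Δ), (δ : OnePoint Δ)}}
    let F₂ : Set (SubEq (OnePoint Δ) 2) :=
      {S | ∃ δ ∈ Δ₂, S.1.toSet = {(∞ : OnePoint Δ), (δ : OnePoint Δ)}}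
    Disjoint F₁ F₂ ∧ IsClosed F₁ ∧ IsClosed F₂ ∧
    ¬ ∃ U V : Set (SubEq (OnePoint Δ) 2),
        IsOpen U ∧ IsOpen V ∧ F₁ ⊆ U ∧ F₂ ⊆ V ∧ Disjoint U V := by
  intro F₁ F₂
  refine ⟨?_, ?_, ?_, ?_⟩
  · -- disjointness
    rw [Set.disjoint_left]
    rintro S ⟨δ₁, hδ₁, hS₁⟩ ⟨δ₂, hδ₂, hS₂⟩
    have h := hS₁.symm.trans hS₂
    have : (δ₁ : OnePoint Δ) ∈ ({(∞ : OnePoint Δ), (δ₂ : OnePoint Δ)} : Set (OnePoint Δ)) := by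
      rw [← h]; exact Set.mem_insert_of_mem _ rfl
    rw [Set.mem_insert_iff, Set.mem_singleton_iff] at this
    rcases this with h' | h'
    · exact OnePoint.coe_ne_infty δ₁ h'
    · rw [OnePoint.coe_eq_coe] at h'
      exact Set.disjoint_left.1 hdisj hδ₁ (h' ▸ hδ₂)
  · exact aux_closed Δ₁ Δ₂ hdisj hunion
  · exact aux_closed Δ₂ Δ₁ hdisj.symm (by rw [Set.union_comm]; exact hunion)
  · rintro ⟨U, V, hU, hV, hFU, hFV, hUV⟩
    -- extract finite exceptional sets
    have hmain : ∀ (W : Set (SubEq (OnePoint Δ) 2)), IsOpen W →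
        ∀ δ : Δ, mkI δ ∈ W →
        ∃ E : Set Δ, E.Finite ∧ ∀ δ' ∉ E, ∀ (hne : δ ≠ δ'), mkS δ δ' hne ∈ W := by
      intro W hW δ hδW
      obtain ⟨T, hT, hTW⟩ := (aux_nhds (mkI δ) W).1 (hW.mem_nhds hδW)
      obtain ⟨E, hEfin, hEmem⟩ := aux_key δ T hT
      exact ⟨E, hEfin, fun δ' hδ' hne => hTW (hEmem δ' hδ')⟩
    have hmemU : ∀ δ ∈ Δ₁, mkI δ ∈ U := fun δ hδ => hFU ⟨δ, hδ, rfl⟩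
    have hmemV : ∀ δ ∈ Δ₂, mkI δ ∈ V := fun δ hδ => hFV ⟨δ, hδ, rfl⟩
    choose! E₁ hE₁fin hE₁mem using fun δ (hδ : δ ∈ Δ₁) => hmain U hU δ (hmemU δ hδ)
    choose! E₂ hE₂fin hE₂mem using fun δ (hδ : δ ∈ Δ₂) => hmain V hV δ (hmemV δ hδ)
    -- counting
    have hΔ₁inf : Δ₁.Infinite := fun hfin => h1 hfin.countable
    let g : ℕ ↪ Δ₁ := hΔ₁inf.natEmbedding
    have hC : (⋃ n : ℕ, E₁ (g n)).Countable :=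
      Set.countable_iUnion (fun n => (hE₁fin (g n) (g n).2).countable)
    have hδ₂ : ∃ δ₂ ∈ Δ₂, δ₂ ∉ ⋃ n : ℕ, E₁ (g n) := by
      by_contra h
      push_neg at h
      exact h2 (hC.mono h)
    obtain ⟨δ₂, hδ₂Δ, hδ₂C⟩ := hδ₂
    have hginj : Function.Injective (fun n => ((g n : Δ₁) : Δ)) :=
      Subtype.val_injective.comp g.injective
    have hn : ∃ n : ℕ, ((g n : Δ₁) : Δ) ∉ E₂ δ₂ := by
      by_contra h
      push_neg at h
      exact (Set.infinite_range_of_injective hginj)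
        ((hE₂fin δ₂ hδ₂Δ).subset (Set.range_subset_iff.2 h))
    obtain ⟨n, hn⟩ := hn
    set δ₁ : Δ := ((g n : Δ₁) : Δ) with hδ₁def
    have hδ₁Δ : δ₁ ∈ Δ₁ := (g n).2
    have hne : δ₁ ≠ δ₂ := fun h => Set.disjoint_left.1 hdisj hδ₁Δ (h ▸ hδ₂Δ)
    have hδ₂E : δ₂ ∉ E₁ δ₁ := fun h => hδ₂C (Set.mem_iUnion.2 ⟨n, h⟩)
    have hinU : mkS δ₁ δ₂ hne ∈ U := hE₁mem δ₁ hδ₁Δ δ₂ hδ₂E hne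
    have hinV : mkS δ₂ δ₁ hne.symm ∈ V := hE₂mem δ₂ hδ₂Δ δ₁ hn hne.symm
    have heq : mkS δ₁ δ₂ hne = mkS δ₂ δ₁ hne.symm := by
      apply Subtype.ext
      show toH ({(δ₁ : OnePoint Δ), (δ₂ : OnePoint Δ)} : Set (OnePoint Δ)) =
        toH ({(δ₂ : OnePoint Δ), (δ₁ : OnePoint Δ)} : Set (OnePoint Δ))
      exact congrArg toH (Set.pair_comm _ _)
    exact Set.disjoint_left.1 hUV hinU (heq ▸ hinV)
end

section
/- Let Z be a compact Hausdorff space whose topology is the order topology of a total order in which every nonempty closed subset has a least element, and let n be a positive integer. Then the map Z_[n] → Z_[n]^⊆ sending a set x to (min x, x) is a continuous section of the projection Z_[n]^⊆ → Z_[n]; in particular that projection admits a continuous right inverse. -/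
private lemma cont_into_order {X Z : Type*} [TopologicalSpace X] [LinearOrder Z]
    [TopologicalSpace Z] [OrderTopology Z] (f : X → Z)
    (h1 : ∀ a : Z, IsOpen (f ⁻¹' Set.Ioi a)) (h2 : ∀ a : Z, IsOpen (f ⁻¹' Set.Iio a)) :
    Continuous f := by
  rw [(OrderTopology.topology_eq_generate_intervals (α := Z) : _)]
  apply continuous_generateFrom_iff.mpr
  rintro s ⟨a, rfl | rfl⟩
  · exact h1 a
  · exact h2 a

/-- Over a compact Hausdorff space carrying the order topology of a total order
in which every nonempty closed set has a least element, the map `x ↦ (min x, x)`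
is a continuous section of the projection `Z_[n]^⊆ → Z_[n]`. -/
theorem stmt9 (Z : Type*) [LinearOrder Z] [TopologicalSpace Z] [OrderTopology Z]
    [CompactSpace Z] [T2Space Z]
    (hmin : ∀ F : Set Z, IsClosed F → F.Nonempty → ∃ m ∈ F, ∀ y ∈ F, m ≤ y)
    (n : ℕ) (hn : 0 < n) :
    ∃ s : SubLe Z n → Inc Z n,
      Continuous s ∧
      (∀ x : SubLe Z n, IncProj Z n (s x) = x) ∧
      ∀ x : SubLe Z n, ∀ y ∈ x.1.toSet, ((s x).1.1 : Z) ≤ y := by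

  classical
  let m : SubLe Z n → Z := fun x => (x.2.2.1.toFinset).min'
    (by exact (Set.Finite.toFinset_nonempty _).mpr x.2.1)
  have hmem : ∀ x : SubLe Z n, m x ∈ x.1.toSet := fun x => by
    have := Finset.min'_mem (x.2.2.1.toFinset)
      (by exact (Set.Finite.toFinset_nonempty _).mpr x.2.1)
    simpa [Set.Finite.mem_toFinset] using this
  have hle : ∀ x : SubLe Z n, ∀ y ∈ x.1.toSet, m x ≤ y := fun x y hy =>
    Finset.min'_le _ y (x.2.2.1.mem_toFinset.mpr hy)
  refine ⟨fun x => ⟨(m x, x), hmem x⟩, ?_, fun x => rfl, fun x y hy => hle x y hy⟩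
  apply Continuous.subtype_mk
  refine Continuous.prodMk ?_ continuous_id
  -- continuity of `m`
  apply cont_into_order
  · -- preimage of Ioi a
    intro a
    have h1 : m ⁻¹' Set.Ioi a =
        Subtype.val ⁻¹' {A : Hyper Z | A.toSet ⊆ Set.Ioi a} := by
      ext x
      constructor
      · intro hx y hy
        exact lt_of_lt_of_le hx (hle x y hy)
      · intro hx
        exact hx (hmem x)
    rw [h1]
    exact IsOpen.preimage continuous_subtype_val
      (TopologicalSpace.isOpen_generateFrom_of_mem ⟨Set.Ioi a, isOpen_Ioi, Or.inl rfl⟩)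
  · -- preimage of Iio a
    intro a
    have h1 : m ⁻¹' Set.Iio a =
        Subtype.val ⁻¹' {A : Hyper Z | (A.toSet ∩ Set.Iio a).Nonempty} := by
      ext x
      constructor
      · intro hx
        exact ⟨m x, hmem x, hx⟩
      · rintro ⟨y, hy, hya⟩
        exact lt_of_le_of_lt (hle x y hy) hya
    rw [h1]
    exact IsOpen.preimage continuous_subtype_val
      (TopologicalSpace.isOpen_generateFrom_of_mem ⟨Set.Iio a, isOpen_Iio, Or.inr rfl⟩)
end

section
/- Let Δ be an uncountable set and Δ⁺ = Δ ∪ {∞} its one-point compactification (Δ discrete). Every uncountable subset of the lexicographically ordered square [0,1]² (with the order topology) has at least two cluster points; consequently [0,1]² with the lexicographic order topology contains no homeomorphic copy of Δ⁺. -/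
/-!
In a hereditarily Lindelöf space the points of a set that are not accumulation points of it form
a discrete, hence countable, subset; so an uncountable set has two distinct accumulation points.
Let `S` be an uncountable subset of the lexicographic square. If its projection to the first
coordinate is uncountable, the projection has two accumulation points `c`; one approached from the
left lifts to the accumulation point `(c, 0)` of `S`, one approached from the right to `(c, 1)`.
Otherwise some vertical fibre `{c} × [0, 1]` meets `S` uncountably, and as the fibre is embedded
continuously, accumulation points inside it are accumulation points of `S`.
In `Δ⁺` only `∞` is not isolated, so under an embedding `f` of `Δ⁺` the uncountable set
`f '' Δ` would accumulate only at `f ∞`.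
-/
open Filter

/-- The lexicographically ordered unit square with its order topology. -/
abbrev LexSquare : Type := Lex (Set.Icc (0:ℝ) 1 × Set.Icc (0:ℝ) 1)

noncomputable instance : TopologicalSpace LexSquare := Preorder.topology LexSquare

instance : OrderTopology LexSquare := ⟨rfl⟩

open Set Topology OnePoint

section Derived

variable {X Y : Type*} [TopologicalSpace X] [TopologicalSpace Y]

theorem countable_diff_derivedSet [HereditarilyLindelofSpace X] (s : Set X) :
    (s \ derivedSet s).Countable := by
  refine (HereditarilyLindelofSpace.isLindelof _).countable_of_isDiscrete
    (isDiscrete_iff_nhdsNE.mpr fun x hx => ?_)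
  have hx_isolated : 𝓝[≠] x ⊓ 𝓟 s = ⊥ := not_neBot.mp hx.2
  exact le_bot_iff.mp (hx_isolated ▸ inf_le_inf_left _ (principal_mono.mpr sdiff_subset))

theorem nontrivial_derivedSet_of_not_countable [HereditarilyLindelofSpace X] {s : Set X}
    (hs : ¬ s.Countable) : (derivedSet s).Nontrivial := by
  have h : ¬ (s ∩ derivedSet s).Countable := fun h =>
    hs <| ((countable_diff_derivedSet s).union h).mono fun x hx => by
      by_cases hx' : x ∈ derivedSet s
      exacts [Or.inr ⟨hx, hx'⟩, Or.inl ⟨hx, hx'⟩]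
  exact (not_subsingleton_iff.mp fun h' => h h'.countable).mono inter_subset_right

theorem Topology.IsEmbedding.accPt_image_iff {f : X → Y} (hf : IsEmbedding f) {x : X}
    {s : Set X} : AccPt (f x) (𝓟 (f '' s)) ↔ AccPt x (𝓟 s) := by
  have h_image : f '' (s \ {x}) = f '' s \ {f x} := by
    rw [image_sdiff hf.injective, image_singleton]
  rw [accPt_principal_iff_nhdsWithin, accPt_principal_iff_nhdsWithin, ← h_image,
    ← hf.map_nhdsWithin_eq, map_neBot_iff]

theorem Topology.IsEmbedding.exists_accPt_of_accPt_image [CompactSpace X] [T2Space Y]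
    {f : X → Y} (hf : IsEmbedding f) {s : Set X} {y : Y} (hy : AccPt y (𝓟 (f '' s))) :
    ∃ x, f x = y ∧ AccPt x (𝓟 s) := by
  have hy_range : y ∈ range f :=
    (isCompact_range hf.continuous).isClosed.closure_subset_iff.mpr
      (image_subset_range f s) (mem_closure_iff_clusterPt.mpr hy.clusterPt)
  obtain ⟨x, rfl⟩ := hy_range
  exact ⟨x, rfl, hf.accPt_image_iff.mp hy⟩

theorem OnePoint.eq_infty_of_accPt [DiscreteTopology X] {x : OnePoint X}
    {F : Filter (OnePoint X)} (hx : AccPt x F) : x = ∞ := by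
  induction x using OnePoint.rec with
  | infty => rfl
  | coe x =>
    have hopen : IsOpen {(x : OnePoint X)} := by
      simpa only [image_singleton] using isOpen_image_coe.mpr (isOpen_discrete {x})
    rw [AccPt, (isOpen_singleton_iff_punctured_nhds _).mp hopen, bot_inf_eq] at hx
    exact absurd rfl hx.ne

end Derived

section LinearOrder

variable {α β : Type*} [LinearOrder α] [TopologicalSpace α] [LinearOrder β]
  [TopologicalSpace β]

theorem AccPt.frequently_nhdsLT_or_nhdsGT {x : α} {s : Set α} (h : AccPt x (𝓟 s)) :
    (∃ᶠ y in 𝓝[<] x, y ∈ s) ∨ ∃ᶠ y in 𝓝[>] x, y ∈ s := by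
  rwa [accPt_iff_frequently_nhdsNE, ← nhdsLT_sup_nhdsGT, frequently_sup] at h

theorem accPt_of_frequently_nhdsLT {x : α} {s : Set α} (h : ∃ᶠ y in 𝓝[<] x, y ∈ s) :
    AccPt x (𝓟 s) :=
  accPt_iff_frequently_nhdsNE.mpr (h.filter_mono (nhdsWithin_mono _ fun _ => ne_of_lt))

theorem accPt_of_frequently_nhdsGT {x : α} {s : Set α} (h : ∃ᶠ y in 𝓝[>] x, y ∈ s) :
    AccPt x (𝓟 s) :=
  accPt_iff_frequently_nhdsNE.mpr (h.filter_mono (nhdsWithin_mono _ fun _ => ne_of_gt))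

theorem Monotone.frequently_nhdsLT_of_frequently_image [OrderTopology α] [OrderTopology β]
    {g : α → β} (hg : Monotone g) {x : α} {s : Set α} (hx : ∀ y < x, g y < g x)
    (h : ∃ᶠ z in 𝓝[<] g x, z ∈ g '' s) :
    ∃ᶠ y in 𝓝[<] x, y ∈ s := by
  obtain ⟨_, ⟨p, -, rfl⟩, hpx⟩ := (h.and_eventually self_mem_nhdsWithin).exists
  rw [(nhdsLT_basis_of_exists_lt ⟨p, hg.reflect_lt hpx⟩).frequently_iff]
  intro l hl
  obtain ⟨_, ⟨q, hq, rfl⟩, hlq, hqx⟩ := (h.and_eventually (Ioo_mem_nhdsLT (hx l hl))).exists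
  exact ⟨q, ⟨hg.reflect_lt hlq, hg.reflect_lt hqx⟩, hq⟩

theorem Monotone.frequently_nhdsGT_of_frequently_image [OrderTopology α] [OrderTopology β]
    {g : α → β} (hg : Monotone g) {x : α} {s : Set α} (hx : ∀ y > x, g x < g y)
    (h : ∃ᶠ z in 𝓝[>] g x, z ∈ g '' s) :
    ∃ᶠ y in 𝓝[>] x, y ∈ s := by
  obtain ⟨_, ⟨p, -, rfl⟩, hxp⟩ := (h.and_eventually self_mem_nhdsWithin).exists
  rw [(nhdsGT_basis_of_exists_gt ⟨p, hg.reflect_lt hxp⟩).frequently_iff]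
  intro u hu
  obtain ⟨_, ⟨q, hq, rfl⟩, hxq, hqu⟩ := (h.and_eventually (Ioo_mem_nhdsGT (hx u hu))).exists
  exact ⟨q, ⟨hg.reflect_lt hxq, hg.reflect_lt hqu⟩, hq⟩

end LinearOrder

namespace Prod.Lex

variable {α β : Type*} [LinearOrder α] [LinearOrder β] [TopologicalSpace (α ×ₗ β)]
  [OrderTopology (α ×ₗ β)]

theorem continuous_toLex_mk [TopologicalSpace β] [OrderTopology β] (a : α) :
    Continuous fun b : β => toLex (a, b) := by
  refine OrderTopology.continuous_iff.mpr fun m => ⟨?_, ?_⟩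
  · have h : (fun b : β => toLex (a, b)) ⁻¹' Ioi m =
        {_b | (ofLex m).1 < a} ∪ ({_b | (ofLex m).1 = a} ∩ Ioi (ofLex m).2) := by
      ext b; simp [Prod.Lex.lt_iff]
    rw [h]
    exact isOpen_const.union (isOpen_const.inter isOpen_Ioi)
  · have h : (fun b : β => toLex (a, b)) ⁻¹' Iio m =
        {_b | a < (ofLex m).1} ∪ ({_b | a = (ofLex m).1} ∩ Iio (ofLex m).2) := by
      ext b; simp [Prod.Lex.lt_iff]
    rw [h]
    exact isOpen_const.union (isOpen_const.inter isOpen_Iio)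

theorem exists_accPt_fst_eq [TopologicalSpace α] [OrderTopology α] [BoundedOrder β]
    {S : Set (α ×ₗ β)} {a : α} (ha : AccPt a (𝓟 ((fun p => (ofLex p).1) '' S))) :
    ∃ p ∈ derivedSet S, (ofLex p).1 = a := by
  rcases ha.frequently_nhdsLT_or_nhdsGT with h | h
  · refine ⟨toLex (a, ⊥), accPt_of_frequently_nhdsLT ?_, rfl⟩
    refine monotone_fst_ofLex.frequently_nhdsLT_of_frequently_image (fun p hp => ?_) h
    rcases Prod.Lex.lt_iff.mp hp with hlt | ⟨-, hlt⟩
    exacts [hlt, absurd hlt not_lt_bot]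
  · refine ⟨toLex (a, ⊤), accPt_of_frequently_nhdsGT ?_, rfl⟩
    refine monotone_fst_ofLex.frequently_nhdsGT_of_frequently_image (fun p hp => ?_) h
    rcases Prod.Lex.lt_iff.mp hp with hlt | ⟨-, hlt⟩
    exacts [hlt, absurd hlt not_top_lt]

theorem nontrivial_derivedSet_of_not_countable_image_fst [TopologicalSpace α] [OrderTopology α]
    [SecondCountableTopology α] [BoundedOrder β] {S : Set (α ×ₗ β)}
    (hS : ¬ ((fun p => (ofLex p).1) '' S).Countable) :
    (derivedSet S).Nontrivial := by
  refine nontrivial_of_image (fun p => (ofLex p).1) _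
    ((_root_.nontrivial_derivedSet_of_not_countable hS).mono fun a ha => ?_)
  obtain ⟨p, hp, rfl⟩ := exists_accPt_fst_eq ha
  exact mem_image_of_mem _ hp

theorem nontrivial_derivedSet_of_not_countable_preimage_toLex_mk [TopologicalSpace β]
    [OrderTopology β] [SecondCountableTopology β] {S : Set (α ×ₗ β)} {a : α}
    (hS : ¬ ((fun b : β => toLex (a, b)) ⁻¹' S).Countable) :
    (derivedSet S).Nontrivial := by
  have h_inj : Function.Injective fun b : β => toLex (a, b) :=
    toLex.injective.comp (Prod.mk_right_injective a)
  refine ((_root_.nontrivial_derivedSet_of_not_countable hS).image h_inj).mono ?_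
  rintro _ ⟨b, hb, rfl⟩
  refine (hb.map (continuous_toLex_mk a).continuousAt h_inj).mono ?_
  rw [map_principal]
  exact principal_mono.mpr (image_preimage_subset _ S)

theorem nontrivial_derivedSet_of_not_countable [TopologicalSpace α] [OrderTopology α]
    [SecondCountableTopology α] [TopologicalSpace β] [OrderTopology β] [SecondCountableTopology β]
    [BoundedOrder β] {S : Set (α ×ₗ β)} (hS : ¬ S.Countable) :
    (derivedSet S).Nontrivial := by
  by_cases h_fst : ((fun p => (ofLex p).1) '' S).Countable
  · have ⟨a, ha⟩ : ∃ a, ¬ ((fun b : β => toLex (a, b)) ⁻¹' S).Countable := by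
      by_contra! h
      refine hS ((h_fst.biUnion fun a _ => (h a).image fun b => toLex (a, b)).mono fun p hp => ?_)
      exact mem_biUnion (mem_image_of_mem _ hp) ⟨(ofLex p).2, hp, rfl⟩
    exact nontrivial_derivedSet_of_not_countable_preimage_toLex_mk ha
  · exact nontrivial_derivedSet_of_not_countable_image_fst h_fst

end Prod.Lex

theorem stmt13 (Δ : Type*) [TopologicalSpace Δ] [DiscreteTopology Δ] [Uncountable Δ] :
    (∀ S : Set LexSquare, ¬ S.Countable →
      ∃ a b : LexSquare, a ≠ b ∧ AccPt a (𝓟 S) ∧ AccPt b (𝓟 S)) ∧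
    ¬ ∃ f : OnePoint Δ → LexSquare, Topology.IsEmbedding f := by
  have h_two_accPt : ∀ S : Set LexSquare, ¬ S.Countable →
      ∃ a b : LexSquare, a ≠ b ∧ AccPt a (𝓟 S) ∧ AccPt b (𝓟 S) := fun S hS => by
    obtain ⟨a, ha, b, hb, hab⟩ := Prod.Lex.nontrivial_derivedSet_of_not_countable hS
    exact ⟨a, b, hab, ha, hb⟩
  refine ⟨h_two_accPt, fun ⟨f, hf⟩ => ?_⟩
  have h_unc : ¬ (f '' range ((↑) : Δ → OnePoint Δ)).Countable := fun h => by
    rw [← range_comp] at h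
    have := h.preimage (hf.injective.comp OnePoint.coe_injective)
    rw [preimage_range, countable_univ_iff] at this
    exact not_countable this
  obtain ⟨a, b, hab, ha, hb⟩ := h_two_accPt _ h_unc
  have h_infty : ∀ y, AccPt y (𝓟 (f '' range ((↑) : Δ → OnePoint Δ))) → y = f ∞ := by
    intro y hy
    obtain ⟨x, rfl, hx⟩ := hf.exists_accPt_of_accPt_image hy
    rw [OnePoint.eq_infty_of_accPt hx]
  exact hab ((h_infty a ha).trans (h_infty b hb).symm)
end

section
/- Let Ω denote the first uncountable ordinal and let f : [0,Ω) × [0,Ω) → ℝ be a continuous function, where [0,Ω) carries the order topology and the square the product topology. Then f is eventually constant: there exists α < Ω such that f is constant on [α,Ω) × [α,Ω). -/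
/-!
Countable subsets of `[0,Ω)` have suprema below `Ω`, so one can close off under countably many
choices. If `f` oscillated by more than `ε` on every tail square `[α,Ω)²`, choose witnesses
`p α, q α` in `[α,Ω)²` and iterate `α ↦` the largest of their coordinates; the iterates
increase to some `δ < Ω`, and the witnesses are squeezed to `(δ, δ)`, contradicting continuity
of `f` there. Taking `ε = 1/(n+1)` and the supremum of the countably many resulting thresholds
gives a tail on which `f` is constant.
-/

/-- The space `[0, Ω)` of countable ordinals, `Ω` the first uncountable ordinal,
with its order topology. -/
noncomputable def Omega1 : Type := (Cardinal.aleph 1).ord.ToType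

noncomputable instance : LinearOrder Omega1 :=
  inferInstanceAs (LinearOrder (Cardinal.aleph 1).ord.ToType)

noncomputable instance : TopologicalSpace Omega1 := Preorder.topology Omega1

instance : OrderTopology Omega1 := ⟨rfl⟩

open Filter Topology Set Cardinal

lemma tendsto_prod_of_tendsto_of_tendsto_of_le_of_le {ι X₁ X₂ : Type*}
    [Preorder X₁] [TopologicalSpace X₁] [OrderTopology X₁]
    [Preorder X₂] [TopologicalSpace X₂] [OrderTopology X₂]
    {l : Filter ι} {g u h : ι → X₁ × X₂} {a : X₁ × X₂}
    (hg : Tendsto g l (𝓝 a)) (hh : Tendsto h l (𝓝 a)) (hgu : g ≤ u) (huh : u ≤ h) :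
    Tendsto u l (𝓝 a) :=
  (tendsto_of_tendsto_of_tendsto_of_le_of_le hg.fst_nhds hh.fst_nhds
      (fun i => (hgu i).1) (fun i => (huh i).1)).prodMk_nhds
    (tendsto_of_tendsto_of_tendsto_of_le_of_le hg.snd_nhds hh.snd_nhds
      (fun i => (hgu i).2) (fun i => (huh i).2))

section CountablyComplete

variable {X : Type*} [LinearOrder X] [TopologicalSpace X] [OrderTopology X] [Nonempty X]

lemma exists_tendsto_diag_of_diag_le (hX : ∀ s : Set X, s.Countable → ∃ a, IsLUB s a)
    {p q : X → X × X} (hp : ∀ α, (α, α) ≤ p α) (hq : ∀ α, (α, α) ≤ q α) :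
    ∃ (β : ℕ → X) (δ : X),
      Tendsto (p ∘ β) atTop (𝓝 (δ, δ)) ∧ Tendsto (q ∘ β) atTop (𝓝 (δ, δ)) := by
  let next : X → X := fun α => (p α).1 ⊔ (p α).2 ⊔ ((q α).1 ⊔ (q α).2)
  let β : ℕ → X := fun n => next^[n] (Classical.arbitrary X)
  have hβ_succ : ∀ n, β (n + 1) = next (β n) := fun n =>
    Function.iterate_succ_apply' next n _
  have hp_le : ∀ n, p (β n) ≤ (β (n + 1), β (n + 1)) := fun n => by
    rw [hβ_succ]
    exact ⟨le_sup_left.trans le_sup_left, le_sup_right.trans le_sup_left⟩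
  have hq_le : ∀ n, q (β n) ≤ (β (n + 1), β (n + 1)) := fun n => by
    rw [hβ_succ]
    exact ⟨le_sup_left.trans le_sup_right, le_sup_right.trans le_sup_right⟩
  have hβ_mono : Monotone β :=
    monotone_nat_of_le_succ fun n => (hp (β n)).1.trans (hp_le n).1
  obtain ⟨δ, hδ⟩ := hX _ (countable_range β)
  have hβ := tendsto_atTop_isLUB hβ_mono hδ
  have hdiag := hβ.prodMk_nhds hβ
  have hdiag_succ := hdiag.comp (tendsto_add_atTop_nat 1)
  exact ⟨β, δ,
    tendsto_prod_of_tendsto_of_tendsto_of_le_of_le hdiag hdiag_succ (fun n => hp (β n)) hp_le,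
    tendsto_prod_of_tendsto_of_tendsto_of_le_of_le hdiag hdiag_succ (fun n => hq (β n)) hq_le⟩

theorem exists_tail_dist_le_of_continuous {Y : Type*} [PseudoMetricSpace Y]
    (hX : ∀ s : Set X, s.Countable → ∃ a, IsLUB s a) {f : X × X → Y}
    (hf : Continuous f) {ε : ℝ} (hε : 0 < ε) :
    ∃ α : X, ∀ p q : X × X, (α, α) ≤ p → (α, α) ≤ q → dist (f p) (f q) ≤ ε := by
  by_contra! h
  choose p q hp hq hpq using h
  obtain ⟨β, δ, hpβ, hqβ⟩ := exists_tendsto_diag_of_diag_le hX hp hq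
  have hdist : Tendsto (fun n => dist (f (p (β n))) (f (q (β n)))) atTop (𝓝 0) := by
    simpa using ((hf.tendsto _).comp hpβ).dist ((hf.tendsto _).comp hqβ)
  obtain ⟨n, hn⟩ := (hdist.eventually (gt_mem_nhds hε)).exists
  exact (hpq (β n)).not_gt hn

theorem exists_tail_eq_of_continuous {Y : Type*} [MetricSpace Y]
    (hX : ∀ s : Set X, s.Countable → ∃ a, IsLUB s a) {f : X × X → Y} (hf : Continuous f) :
    ∃ α : X, ∀ p q : X × X, (α, α) ≤ p → (α, α) ≤ q → f p = f q := by
  choose a ha using fun n : ℕ =>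
    exists_tail_dist_le_of_continuous hX hf (Nat.one_div_pos_of_nat (n := n))
  obtain ⟨α, hα, -⟩ := hX _ (countable_range a)
  refine ⟨α, fun p q hp hq => eq_of_forall_dist_le fun ε hε => ?_⟩
  obtain ⟨n, hn⟩ := exists_nat_one_div_lt hε
  have han : (a n, a n) ≤ (α, α) := ⟨hα ⟨n, rfl⟩, hα ⟨n, rfl⟩⟩
  exact (ha n p q (han.trans hp) (han.trans hq)).trans hn.le

end CountablyComplete

namespace Omega1

instance : WellFoundedLT Omega1 :=
  inferInstanceAs (WellFoundedLT (Cardinal.aleph 1).ord.ToType)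

instance : Nonempty Omega1 :=
  nonempty_ord_toType (aleph_pos 1).ne'

lemma cof_eq : Order.cof Omega1 = ℵ₁ :=
  (Ordinal.cof_toType _).trans isRegular_aleph_one.cof_ord

lemma bddAbove_of_countable {s : Set Omega1} (hs : s.Countable) : BddAbove s :=
  .of_not_isCofinal fun h =>
    (Order.cof_le h).not_gt (cof_eq ▸ lt_aleph_one_iff.2 (le_aleph0_iff_set_countable.2 hs))

lemma exists_isLUB_of_countable {s : Set Omega1} (hs : s.Countable) : ∃ a, IsLUB s a := by
  obtain ⟨a, ha, hmin⟩ := wellFounded_lt.has_min _ (bddAbove_of_countable hs)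
  exact ⟨a, ha, fun b hb => not_lt.1 (hmin b hb)⟩

end Omega1

/-- A continuous real-valued function on `[0,Ω)²` is eventually constant. -/
theorem stmt15 (f : Omega1 × Omega1 → ℝ) (hf : Continuous f) :
    ∃ α : Omega1, ∀ p q : Omega1 × Omega1,
      α ≤ p.1 → α ≤ p.2 → α ≤ q.1 → α ≤ q.2 → f p = f q := by
  obtain ⟨α, hα⟩ :=
    exists_tail_eq_of_continuous (fun _ => Omega1.exists_isLUB_of_countable) hf
  exact ⟨α, fun p q hp₁ hp₂ hq₁ hq₂ => hα p q ⟨hp₁, hp₂⟩ ⟨hq₁, hq₂⟩⟩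
end

section
/- Let Δ be an infinite set and Δ⁺ its one-point compactification with Δ discrete. For n ≥ 2 and d with 2 ≤ d ≤ n, fix a (d−2)-element subset D ⊂ Δ. Then the map sending a two-element subset z of (Δ \ D)⁺ to z ∪ D is a closed topological embedding of (Δ \ D)⁺_(2) into Δ⁺_(d), where subscript (k) denotes the space of exactly-k-element subsets with the Vietoris topology. -/
/-- The canonical map `(Δ \ D)⁺ → Δ⁺` between one-point compactifications
induced by the inclusion `Δ \ D ⊆ Δ`. -/
def ptMap {Δ : Type*} (D : Set Δ) : OnePoint {a : Δ // a ∉ D} → OnePoint Δ :=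
  Option.map Subtype.val

/-!
Since `D` is finite, `ptMap D : (Δ \ D)⁺ → Δ⁺` is an open embedding whose range is the
complement of the clopen set `D`. For such a map `f`, `A ↦ f '' A ∪ D` pulls the Vietoris
subbasis of `Δ⁺` back onto that of `(Δ \ D)⁺`, so it is an embedding of hyperspaces, and it adds
`|D| = d - 2` points to every finite set. Its image in `Δ⁺_(d)` is the set of `d`-element sets
containing `D`, which is closed because points of `Δ⁺` are closed.
-/

open Set Topology Function

namespace Hyper

variable {X Y : Type*}

def imageUnion (f : X → Y) (C : Set Y) (A : Hyper X) : Hyper Y := (f '' A.toSet ∪ C : Set Y)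

lemma toSet_imageUnion (f : X → Y) (C : Set Y) (A : Hyper X) :
    (imageUnion f C A).toSet = f '' A.toSet ∪ C := rfl

variable {f : X → Y} {C : Set Y}

lemma injective_imageUnion (hf : Injective f) (hfC : Disjoint (range f) C) :
    Injective (imageUnion f C) := by
  have hdiff (A : Hyper X) : f '' A.toSet = (imageUnion f C A).toSet \ C :=
    (union_sdiff_cancel_right ((hfC.mono_left (image_subset_range f _)).inter_eq.le)).symm
  intro A B hAB
  exact image_injective.mpr hf (show f '' A.toSet = f '' B.toSet by rw [hdiff, hdiff, hAB])

variable [TopologicalSpace X] [TopologicalSpace Y]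

lemma isOpen_setOf_subset {W : Set X} (hW : IsOpen W) :
    IsOpen {A : Hyper X | A.toSet ⊆ W} :=
  TopologicalSpace.isOpen_generateFrom_of_mem ⟨W, hW, Or.inl rfl⟩

lemma isOpen_setOf_inter_nonempty {W : Set X} (hW : IsOpen W) :
    IsOpen {A : Hyper X | (A.toSet ∩ W).Nonempty} :=
  TopologicalSpace.isOpen_generateFrom_of_mem ⟨W, hW, Or.inr rfl⟩

lemma isClosed_setOf_superset [T1Space X] (C : Set X) :
    IsClosed {A : Hyper X | C ⊆ A.toSet} := by
  have hcompl : {A : Hyper X | C ⊆ A.toSet}ᶜ = ⋃ c ∈ C, {A : Hyper X | A.toSet ⊆ {c}ᶜ} := by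
    ext A
    simp [not_subset, subset_compl_singleton_iff]
  rw [← isOpen_compl_iff, hcompl]
  exact isOpen_biUnion fun c _ => isOpen_setOf_subset isOpen_compl_singleton

lemma continuous_imageUnion (hf : Continuous f) (C : Set Y) : Continuous (imageUnion f C) := by
  refine continuous_generateFrom_iff.mpr ?_
  rintro s ⟨V, hV, rfl | rfl⟩
  · by_cases hCV : C ⊆ V
    · have hpre : imageUnion f C ⁻¹' {B | B.toSet ⊆ V} = {A | A.toSet ⊆ f ⁻¹' V} := by
        ext A
        simp [toSet_imageUnion, hCV]
      exact hpre ▸ isOpen_setOf_subset (hV.preimage hf)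
    · have hpre : imageUnion f C ⁻¹' {B | B.toSet ⊆ V} = ∅ := by
        ext A
        simp [toSet_imageUnion, hCV]
      exact hpre ▸ isOpen_empty
  · by_cases hCV : (C ∩ V).Nonempty
    · have hpre : imageUnion f C ⁻¹' {B | (B.toSet ∩ V).Nonempty} = univ :=
        eq_univ_of_forall fun A => (hCV.mono (inter_subset_inter_left V subset_union_right) :)
      exact hpre ▸ isOpen_univ
    · have hpre : imageUnion f C ⁻¹' {B | (B.toSet ∩ V).Nonempty} =
          {A | (A.toSet ∩ f ⁻¹' V).Nonempty} := by
        ext A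
        rw [not_nonempty_iff_eq_empty] at hCV
        simp only [mem_preimage, mem_ofPred_eq, toSet_imageUnion, union_inter_distrib_right, hCV,
          union_empty, ← image_inter_preimage, image_nonempty]
      exact hpre ▸ isOpen_setOf_inter_nonempty (hV.preimage hf)

/-- `f` carries opens to opens, and the open set `C`, disjoint from the range of `f`, can be
added to the "inside" subbasic sets and is invisible to the "hitting" ones. -/
lemma isEmbedding_imageUnion (hf : IsOpenEmbedding f) (hC : IsOpen C)
    (hfC : Disjoint (range f) C) : IsEmbedding (imageUnion f C) := by
  refine ⟨⟨le_antisymm (continuous_iff_le_induced.mp (continuous_imageUnion hf.continuous C))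
    (le_generateFrom ?_)⟩, injective_imageUnion hf.injective hfC⟩
  have himage (A : Set X) : Disjoint (f '' A) C := hfC.mono_left (image_subset_range f A)
  rintro s ⟨W, hW, rfl | rfl⟩ <;> rw [isOpen_induced_iff]
  · refine ⟨{B | B.toSet ⊆ f '' W ∪ C}, isOpen_setOf_subset ((hf.isOpenMap W hW).union hC), ?_⟩
    ext A
    simp only [mem_preimage, mem_ofPred_eq, toSet_imageUnion, union_subset_iff,
      subset_union_right, and_true]
    rw [← image_subset_image_iff hf.injective]
    exact ⟨fun h => Disjoint.subset_left_of_subset_union h (himage A.toSet),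
      fun h => h.trans subset_union_left⟩
  · refine ⟨{B | (B.toSet ∩ f '' W).Nonempty}, isOpen_setOf_inter_nonempty (hf.isOpenMap W hW), ?_⟩
    ext A
    simp only [mem_preimage, mem_ofPred_eq, toSet_imageUnion, union_inter_distrib_right,
      (himage W).symm.inter_eq, union_empty, ← image_inter hf.injective, image_nonempty]

end Hyper

lemma Set.ncard_image_union {X Y : Type*} {f : X → Y} {C : Set Y} (hf : Injective f)
    (hfC : Disjoint (range f) C) {A : Set X} (hA : A.Finite) (hC : C.Finite) : (f '' A ∪ C).ncard = A.ncard + C.ncard := by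
  rw [ncard_union_eq (hfC.mono_left (image_subset_range f A)) (hA.image f) hC,
    ncard_image_of_injective A hf]

namespace SubEq

variable {X Y : Type*} [TopologicalSpace X] [TopologicalSpace Y] {f : X → Y} {C : Set Y} {k l : ℕ}

def imageUnion (hf : Injective f) (hfC : Disjoint (range f) C) (hC : C.Finite)
    (hkl : k + C.ncard = l) (A : SubEq X k) : SubEq Y l :=
  ⟨Hyper.imageUnion f C A.1, (A.2.1.image f).union hC,
    by rw [Hyper.toSet_imageUnion, Set.ncard_image_union hf hfC A.2.1 hC, A.2.2, hkl]⟩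

lemma range_imageUnion (hf : Injective f) (hfC : IsCompl (range f) C) (hC : C.Finite)
    (hkl : k + C.ncard = l) :
    range (imageUnion hf hfC.disjoint hC hkl) = {B | C ⊆ B.1.toSet} := by
  refine Subset.antisymm (range_subset_iff.mpr fun A => subset_union_right) fun B hCB => ?_
  have hB : f '' (f ⁻¹' B.1.toSet) = B.1.toSet \ C := by
    rw [image_preimage_eq_inter_range, hfC.eq_compl, sdiff_eq]
  have hcard : (f ⁻¹' B.1.toSet).ncard = k := by
    have := ncard_sdiff hCB hC
    rw [← hB, ncard_image_of_injective _ hf, B.2.2] at this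
    omega
  refine ⟨⟨f ⁻¹' B.1.toSet, B.2.1.preimage hf.injOn, hcard⟩, Subtype.ext ?_⟩
  change f '' (f ⁻¹' B.1.toSet) ∪ C = B.1.toSet
  rw [hB, sdiff_union_of_subset hCB]

lemma isClosedEmbedding_imageUnion [T1Space Y] (hf : IsOpenEmbedding f) (hCo : IsOpen C)
    (hfC : IsCompl (range f) C) (hC : C.Finite) (hkl : k + C.ncard = l) :
    IsClosedEmbedding (imageUnion hf.injective hfC.disjoint hC hkl) := by
  have hemb : IsEmbedding (Subtype.val ∘ imageUnion hf.injective hfC.disjoint hC hkl) :=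
    (Hyper.isEmbedding_imageUnion hf hCo hfC.disjoint).comp IsEmbedding.subtypeVal
  refine ⟨IsEmbedding.subtypeVal.of_comp_iff.mp hemb, ?_⟩
  rw [range_imageUnion hf.injective hfC hC hkl]
  exact (Hyper.isClosed_setOf_superset C).preimage continuous_subtype_val

end SubEq

lemma range_ptMap {Δ : Type*} (D : Set Δ) :
    range (ptMap D) = (((↑) : Δ → OnePoint Δ) '' D)ᶜ := by
  change range (OnePoint.map Subtype.val) = _
  ext x
  induction x using OnePoint.rec <;> simp [OnePoint.exists, OnePoint.infty_ne_coe]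

lemma isOpenEmbedding_ptMap {Δ : Type*} [TopologicalSpace Δ] [DiscreteTopology Δ] {D : Set Δ}
    (hD : D.Finite) : IsOpenEmbedding (ptMap D) := by
  have hcont : Continuous (ptMap D) := by
    refine OnePoint.continuous_map continuous_of_discreteTopology ?_
    simp only [Filter.coclosedCompact_eq_cocompact, Filter.cocompact_eq_cofinite]
    exact Subtype.val_injective.tendsto_cofinite
  refine ⟨(hcont.isClosedEmbedding (Option.map_injective Subtype.val_injective)).isEmbedding, ?_⟩
  rw [range_ptMap]
  exact (OnePoint.isClosed_image_coe.mpr ⟨isClosed_discrete D, hD.isCompact⟩).isOpen_compl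

theorem stmt19_general (Δ : Type*) [TopologicalSpace Δ] [DiscreteTopology Δ]
    (d : ℕ) (hd2 : 2 ≤ d)
    (D : Set Δ) (hDfin : D.Finite) (hDcard : D.ncard = d - 2) :
    ∃ F : SubEq (OnePoint {a : Δ // a ∉ D}) 2 → SubEq (OnePoint Δ) d,
      (∀ z, (F z).1.toSet =
        ptMap D '' z.1.toSet ∪ (fun a : Δ => (a : OnePoint Δ)) '' D) ∧
      Topology.IsClosedEmbedding F := by
  have hcard : 2 + (((↑) : Δ → OnePoint Δ) '' D).ncard = d := by
    rw [ncard_image_of_injective D OnePoint.coe_injective]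
    omega
  exact ⟨_, fun z => rfl, SubEq.isClosedEmbedding_imageUnion (isOpenEmbedding_ptMap hDfin)
    (OnePoint.isOpen_image_coe.mpr (isOpen_discrete D)) (range_ptMap D ▸ isCompl_compl.symm)
    (hDfin.image _) hcard⟩

/-- For a `(d−2)`-element subset `D ⊆ Δ`, the map `z ↦ z ∪ D` is a closed
embedding of `(Δ \ D)⁺_(2)` into `Δ⁺_(d)`. -/
theorem stmt19 (Δ : Type*) [Infinite Δ] [TopologicalSpace Δ] [DiscreteTopology Δ]
    (n d : ℕ) (hn : 2 ≤ n) (hd2 : 2 ≤ d) (hdn : d ≤ n)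
    (D : Set Δ) (hDfin : D.Finite) (hDcard : D.ncard = d - 2) :
    ∃ F : SubEq (OnePoint {a : Δ // a ∉ D}) 2 → SubEq (OnePoint Δ) d,
      (∀ z, (F z).1.toSet =
        ptMap D '' z.1.toSet ∪ (fun a : Δ => (a : OnePoint Δ)) '' D) ∧
      Topology.IsClosedEmbedding F :=
  stmt19_general Δ d hd2 D hDfin hDcard
end
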